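/- arXiv:1104.3988 — 3 statements merged into one kernel-verified Lean document; each statement's English description precedes it below -/
import Mathlib

section
/- Let (F,G) be a cross-Sperner pair of families of subsets of [n] such that for every cross-Sperner pair (F',G') of families of subsets of [n] one has |F'| + |G'| ≤ |F| + |G| (i.e., (F,G) maximizes the sum of sizes). Then both F and G are convex families, i.e., whenever F₁, F₂ ∈ F and F₁ ⊆ A ⊆ F₂ we have A ∈ F, and likewise for G. -/
/-- A pair of families `(𝓕, 𝓖)` is cross-Sperner if there is no pair
`F ∈ 𝓕`, `G ∈ 𝓖` with `F ⊆ G` or `G ⊆ F`. -/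
def CrossSperner (𝓕 𝓖 : Finset (Finset ℕ)) : Prop :=
  ∀ F ∈ 𝓕, ∀ G ∈ 𝓖, ¬ F ⊆ G ∧ ¬ G ⊆ F

/-- A family `𝓗` is convex if `H₁ ⊆ A ⊆ H₂` with `H₁, H₂ ∈ 𝓗` implies `A ∈ 𝓗`. -/
def ConvexFamily (𝓗 : Finset (Finset ℕ)) : Prop :=
  ∀ H₁ ∈ 𝓗, ∀ H₂ ∈ 𝓗, ∀ A : Finset ℕ, H₁ ⊆ A → A ⊆ H₂ → A ∈ 𝓗

/-! Adding a set `A` with `H₁ ⊆ A ⊆ H₂` for `H₁, H₂ ∈ 𝓕` keeps the pair cross-Sperner: a set of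
`𝓖` below `A` would lie below `H₂`, and one above `A` would lie above `H₁`. So if `𝓕` missed such
an `A`, inserting it would enlarge `|𝓕| + |𝓖|`; the same argument applies to `𝓖` by symmetry. -/

namespace CrossSperner

variable {𝓕 𝓖 : Finset (Finset ℕ)}

theorem symm (h : CrossSperner 𝓕 𝓖) : CrossSperner 𝓖 𝓕 :=
  fun G hG F hF => (h F hF G hG).symm

theorem insert_of_subset_of_subset (h : CrossSperner 𝓕 𝓖) {H₁ H₂ A : Finset ℕ}
    (hH₁ : H₁ ∈ 𝓕) (hH₂ : H₂ ∈ 𝓕) (hA₁ : H₁ ⊆ A) (hA₂ : A ⊆ H₂) :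
    CrossSperner (insert A 𝓕) 𝓖 := by
  intro F hF G hG
  rcases Finset.mem_insert.mp hF with rfl | hF
  · exact ⟨fun hAG => (h H₁ hH₁ G hG).1 (hA₁.trans hAG),
      fun hGA => (h H₂ hH₂ G hG).2 (hGA.trans hA₂)⟩
  · exact h F hF G hG

end CrossSperner

theorem convexFamily_of_card_maximal {U : Finset ℕ} {𝓕 𝓖 : Finset (Finset ℕ)}
    (h𝓕 : 𝓕 ⊆ U.powerset) (h : CrossSperner 𝓕 𝓖)
    (hmax : ∀ 𝓕' : Finset (Finset ℕ), 𝓕' ⊆ U.powerset → CrossSperner 𝓕' 𝓖 →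
      𝓕'.card ≤ 𝓕.card) :
    ConvexFamily 𝓕 := by
  intro H₁ hH₁ H₂ hH₂ A hA₁ hA₂
  by_contra hA
  have hAU : A ∈ U.powerset :=
    Finset.mem_powerset.mpr (hA₂.trans (Finset.mem_powerset.mp (h𝓕 hH₂)))
  have hle := hmax (insert A 𝓕) (Finset.insert_subset hAU h𝓕)
    (h.insert_of_subset_of_subset hH₁ hH₂ hA₁ hA₂)
  rw [Finset.card_insert_of_notMem hA] at hle
  omega

theorem cross_sperner_maximal_convex (n : ℕ) (𝓕 𝓖 : Finset (Finset ℕ))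
    (h𝓕 : 𝓕 ⊆ (Finset.Icc 1 n).powerset) (h𝓖 : 𝓖 ⊆ (Finset.Icc 1 n).powerset)
    (h : CrossSperner 𝓕 𝓖)
    (hmax : ∀ 𝓕' 𝓖' : Finset (Finset ℕ),
      𝓕' ⊆ (Finset.Icc 1 n).powerset → 𝓖' ⊆ (Finset.Icc 1 n).powerset →
      CrossSperner 𝓕' 𝓖' → 𝓕'.card + 𝓖'.card ≤ 𝓕.card + 𝓖.card) :
    ConvexFamily 𝓕 ∧ ConvexFamily 𝓖 := by
  refine ⟨convexFamily_of_card_maximal h𝓕 h fun 𝓕' h𝓕' h' => ?_,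
    convexFamily_of_card_maximal h𝓖 h.symm fun 𝓖' h𝓖' h' => ?_⟩
  · have := hmax 𝓕' 𝓖 h𝓕' h𝓖 h'
    omega
  · have := hmax 𝓕 𝓖' h𝓕 h𝓖' h'.symm
    omega
end

section
/- Let (F,G) be a cross-Sperner pair of families of subsets of [n], and suppose there exist sets F₀ ∈ F and G₀ ∈ G with |F₀| + |G₀| < ⌈n/2⌉ − 1. Then |F| + |G| < 2^n − 2^⌈n/2⌉ − 2^⌊n/2⌋ + 1. -/
open Finset

namespace CrossSperner

variable {𝓕 𝓖 : Finset (Finset ℕ)}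

theorem disjoint (h : CrossSperner 𝓕 𝓖) : Disjoint 𝓕 𝓖 :=
  disjoint_left.mpr fun x hx𝓕 hx𝓖 ↦ (h x hx𝓕 x hx𝓖).1 subset_rfl

theorem disjoint_Icc_union {F₀ G₀ : Finset ℕ} (h : CrossSperner 𝓕 𝓖) (hF₀ : F₀ ∈ 𝓕)
    (hG₀ : G₀ ∈ 𝓖) (A : Finset ℕ) : Disjoint (𝓕 ∪ 𝓖) (Icc (F₀ ∪ G₀) A) := by
  refine disjoint_left.mpr fun x hx hxIcc ↦ ?_
  have hsup : F₀ ∪ G₀ ⊆ x := (mem_Icc.mp hxIcc).1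
  rcases mem_union.mp hx with hx𝓕 | hx𝓖
  · exact (h x hx𝓕 G₀ hG₀).2 (subset_union_right.trans hsup)
  · exact (h F₀ hF₀ x hx𝓖).1 (subset_union_left.trans hsup)

theorem card_add_card_add_two_pow_le {A F₀ G₀ : Finset ℕ} (h𝓕 : 𝓕 ⊆ A.powerset)
    (h𝓖 : 𝓖 ⊆ A.powerset) (h : CrossSperner 𝓕 𝓖) (hF₀ : F₀ ∈ 𝓕) (hG₀ : G₀ ∈ 𝓖) :
    #𝓕 + #𝓖 + 2 ^ (#A - #(F₀ ∪ G₀)) ≤ 2 ^ #A := by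
  have hA : F₀ ∪ G₀ ⊆ A := union_subset (mem_powerset.mp (h𝓕 hF₀)) (mem_powerset.mp (h𝓖 hG₀))
  have hIcc : Icc (F₀ ∪ G₀) A ⊆ A.powerset := fun x hx ↦ mem_powerset.mpr (mem_Icc.mp hx).2
  calc #𝓕 + #𝓖 + 2 ^ (#A - #(F₀ ∪ G₀))
      = #(𝓕 ∪ 𝓖 ∪ Icc (F₀ ∪ G₀) A) := by
        rw [card_union_of_disjoint (h.disjoint_Icc_union hF₀ hG₀ A),
          card_union_of_disjoint h.disjoint, card_Icc_finset hA]
    _ ≤ #A.powerset := card_le_card (union_subset (union_subset h𝓕 h𝓖) hIcc)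
    _ = 2 ^ #A := card_powerset A

end CrossSperner

theorem two_pow_add_two_pow_le_two_pow_sub {n k : ℕ} (hk : k + 1 < (n + 1) / 2) :
    2 ^ ((n + 1) / 2) + 2 ^ (n / 2) ≤ 2 ^ (n - k) := by
  have hceil : 2 ^ ((n + 1) / 2) ≤ 2 * 2 ^ (n / 2) := by
    rw [← pow_succ']
    exact Nat.pow_le_pow_right two_pos (by omega)
  calc 2 ^ ((n + 1) / 2) + 2 ^ (n / 2) ≤ 2 ^ (n / 2 + 2) := by rw [pow_add]; omega
    _ ≤ 2 ^ (n - k) := Nat.pow_le_pow_right two_pos (by omega)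

theorem cross_sperner_small_sets (n : ℕ) (𝓕 𝓖 : Finset (Finset ℕ))
    (h𝓕 : 𝓕 ⊆ (Finset.Icc 1 n).powerset) (h𝓖 : 𝓖 ⊆ (Finset.Icc 1 n).powerset)
    (h : CrossSperner 𝓕 𝓖)
    (F₀ G₀ : Finset ℕ) (hF₀ : F₀ ∈ 𝓕) (hG₀ : G₀ ∈ 𝓖)
    (hsmall : F₀.card + G₀.card < (n + 1) / 2 - 1) :
    𝓕.card + 𝓖.card < 2 ^ n - 2 ^ ((n + 1) / 2) - 2 ^ (n / 2) + 1 := by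
  have hcount := h.card_add_card_add_two_pow_le h𝓕 h𝓖 hF₀ hG₀
  rw [Nat.card_Icc, Nat.add_sub_cancel] at hcount
  have hpow := two_pow_add_two_pow_le_two_pow_sub (k := #(F₀ ∪ G₀)) (n := n)
    (by have := card_union_le F₀ G₀; omega)
  omega
end

section
/- For any set S ⊆ [n], the number of sets T ⊆ [n] with T ≠ S such that T ⊆ S or S ⊆ T equals 2^|S| + 2^(n−|S|) − 2; moreover, for every S ⊆ [n] one has 2^|S| + 2^(n−|S|) − 2 ≥ 2^⌈n/2⌉ + 2^⌊n/2⌋ − 2, with equality when |S| = ⌈n/2⌉. Consequently F(n,1) = 2^n − 2^⌈n/2⌉ − 2^⌊n/2⌋ + 1. -/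
open Finset

namespace Finset

variable {α : Type*} [DecidableEq α] {U S : Finset α}

theorem filter_powerset_ne_and_comparable_eq (hS : S ⊆ U) :
    {T ∈ U.powerset | T ≠ S ∧ (T ⊆ S ∨ S ⊆ T)} = Iio S ∪ Ioc S U := by
  ext T
  simp only [mem_filter, mem_powerset, mem_union, mem_Iio, mem_Ioc]
  constructor
  · rintro ⟨hTU, hTS, hT | hT⟩
    · exact .inl (lt_of_le_of_ne hT hTS)
    · exact .inr ⟨lt_of_le_of_ne hT (Ne.symm hTS), hTU⟩
  · rintro (hT | ⟨hT, hTU⟩)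
    · exact ⟨hT.le.trans hS, hT.ne, .inl hT.le⟩
    · exact ⟨hTU, hT.ne', .inr hT.le⟩

theorem card_filter_powerset_ne_and_comparable (hS : S ⊆ U) :
    #{T ∈ U.powerset | T ≠ S ∧ (T ⊆ S ∨ S ⊆ T)} = 2 ^ #S + 2 ^ (#U - #S) - 2 := by
  have hdisj : Disjoint (Iio S) (Ioc S U) := disjoint_left.2 fun T hlt hgt =>
    lt_asymm (mem_Iio.1 hlt) (mem_Ioc.1 hgt).1
  rw [filter_powerset_ne_and_comparable_eq hS, card_union_of_disjoint hdisj, card_Iio_finset,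
    card_Ioc_finset hS]
  have := Nat.one_le_two_pow (n := #S)
  have := Nat.one_le_two_pow (n := #U - #S)
  omega

theorem card_filter_powerset_not_comparable_add (hS : S ⊆ U) :
    #{T ∈ U.powerset | ¬(T ⊆ S ∨ S ⊆ T)} + (2 ^ #S + 2 ^ (#U - #S)) = 2 ^ #U + 1 := by
  have hcomparable : {T ∈ U.powerset | T ⊆ S ∨ S ⊆ T} =
      insert S {T ∈ U.powerset | T ≠ S ∧ (T ⊆ S ∨ S ⊆ T)} := by
    ext T
    by_cases hT : T = S
    · subst hT; simpa using hS
    · simp [hT]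
  have hsplit := card_filter_add_card_filter_not (s := U.powerset) (p := fun T => T ⊆ S ∨ S ⊆ T)
  rw [hcomparable, card_insert_of_notMem (by simp), card_filter_powerset_ne_and_comparable hS,
    card_powerset] at hsplit
  have := Nat.one_le_two_pow (n := #S)
  have := Nat.one_le_two_pow (n := #U - #S)
  omega

end Finset

theorem Nat.two_pow_half_add_two_pow_half_le {n k : ℕ} (hk : k ≤ n) :
    2 ^ ((n + 1) / 2) + 2 ^ (n / 2) ≤ 2 ^ k + 2 ^ (n - k) := by
  wlog hkn : 2 * k ≤ n generalizing k
  · have := this (Nat.sub_le n k) (by omega)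
    rwa [Nat.sub_sub_self hk, add_comm (2 ^ (n - k))] at this
  -- Rearrangement, with `c = (n + 1) / 2`: `2 ^ c + 2 ^ k * 2 ^ d ≤ 2 ^ k + 2 ^ c * 2 ^ d`
  -- because `2 ^ k ≤ 2 ^ c`.
  obtain ⟨d, hd⟩ : ∃ d, n / 2 = k + d := ⟨n / 2 - k, by omega⟩
  have hnk : n - k = (n + 1) / 2 + d := by omega
  rw [hd, hnk, pow_add, pow_add]
  simpa [add_comm] using
    mul_add_mul_le_mul_add_mul (Nat.pow_le_pow_right two_pos (by omega : k ≤ (n + 1) / 2))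
      (Nat.one_le_two_pow (n := d))

theorem crossSperner_singleton_iff {S : Finset ℕ} {𝓖 : Finset (Finset ℕ)} :
    CrossSperner {S} 𝓖 ↔ ∀ G ∈ 𝓖, ¬(G ⊆ S ∨ S ⊆ G) := by
  simp only [CrossSperner, mem_singleton, forall_eq, not_or]
  exact forall₂_congr fun _ _ => and_comm

theorem cross_sperner_F_n_1 (n : ℕ) :
    (∀ S : Finset ℕ, S ⊆ Finset.Icc 1 n →
      ((Finset.Icc 1 n).powerset.filter (fun T => T ≠ S ∧ (T ⊆ S ∨ S ⊆ T))).card =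
        2 ^ S.card + 2 ^ (n - S.card) - 2) ∧
    (∀ S : Finset ℕ, S ⊆ Finset.Icc 1 n →
      2 ^ ((n + 1) / 2) + 2 ^ (n / 2) - 2 ≤ 2 ^ S.card + 2 ^ (n - S.card) - 2) ∧
    (∀ S : Finset ℕ, S ⊆ Finset.Icc 1 n → S.card = (n + 1) / 2 →
      2 ^ S.card + 2 ^ (n - S.card) - 2 = 2 ^ ((n + 1) / 2) + 2 ^ (n / 2) - 2) ∧
    (∃ M : ℕ,
      IsGreatest {g : ℕ | ∃ 𝓖 𝓕 : Finset (Finset ℕ),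
        𝓖 ⊆ (Finset.Icc 1 n).powerset ∧ 𝓕 ⊆ (Finset.Icc 1 n).powerset ∧
        𝓕.card = 1 ∧ CrossSperner 𝓕 𝓖 ∧ 𝓖.card = g} M ∧
      (M : ℤ) = 2 ^ n - 2 ^ ((n + 1) / 2) - 2 ^ (n / 2) + 1) := by
  have hU : #(Icc 1 n) = n := by simp
  have hcard : ∀ S ⊆ Icc 1 n, #S ≤ n := fun S hS => hU ▸ card_le_card hS
  have hhalf : n - (n + 1) / 2 = n / 2 := by omega
  obtain ⟨S₀, hS₀, hS₀card⟩ := exists_subset_card_eq (show (n + 1) / 2 ≤ #(Icc 1 n) by omega)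
  have hS₀count := card_filter_powerset_not_comparable_add hS₀
  rw [hU, hS₀card, hhalf] at hS₀count
  refine ⟨fun S hS => by rw [card_filter_powerset_ne_and_comparable hS, hU], fun S hS => ?_,
    fun S _ hS => by rw [hS, hhalf], ⟨#{T ∈ (Icc 1 n).powerset | ¬(T ⊆ S₀ ∨ S₀ ⊆ T)}, ⟨?_, ?_⟩,
      by zify at hS₀count; linarith⟩⟩
  · have := Nat.two_pow_half_add_two_pow_half_le (hcard S hS)
    omega
  · exact ⟨_, {S₀}, filter_subset _ _, by simpa using hS₀, card_singleton S₀,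
      crossSperner_singleton_iff.2 fun G hG => (mem_filter.1 hG).2, rfl⟩
  · rintro g ⟨𝓖, 𝓕, h𝓖, h𝓕, h𝓕card, hcross, rfl⟩
    obtain ⟨S, rfl⟩ := card_eq_one.1 h𝓕card
    have hS : S ⊆ Icc 1 n := mem_powerset.1 (h𝓕 (mem_singleton_self S))
    have h𝓖S : 𝓖 ⊆ {T ∈ (Icc 1 n).powerset | ¬(T ⊆ S ∨ S ⊆ T)} := fun G hG =>
      mem_filter.2 ⟨h𝓖 hG, crossSperner_singleton_iff.1 hcross G hG⟩
    have hScount := card_filter_powerset_not_comparable_add hS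
    rw [hU] at hScount
    have := Nat.two_pow_half_add_two_pow_half_le (hcard S hS)
    have := card_le_card h𝓖S
    omega
end
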